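/- arXiv:1308.3480 — 2 statements merged into one kernel-verified Lean document; each statement's English description precedes it below -/
import Mathlib

section
/- Let F be a field, d ≥ 1, q nonzero not a root of unity, t nonzero with t ∉ {q^{d-2n+1} : 1 ≤ n ≤ d}. With L_q(t) as above, L_q(t) is invertible and its inverse is upper triangular with (i,j)-entry (q^{2(d-j+1)}; q²)_{j-i} / (t q^{d-2j+1}; q²)_{j-i} · q^{d-2j} for 0 ≤ i ≤ j ≤ d. -/
/-- q-Pochhammer symbol `(a;b)_n = ∏_{k<n} (1 - a b^k)`. -/
def qPoch {F : Type*} [Field F] (a b : F) (n : ℕ) : F :=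
  ∏ k ∈ Finset.range n, (1 - a * b ^ k)

/-- The upper bidiagonal matrix `L_q(t)` with `(i,i)`-entry `q^{2i-d}` and
`(i-1,i)`-entry `(q^d - q^{2i-2-d})/(1 - t q^{d-2i+1})`. -/
def Lmat {F : Type*} [Field F] (d : ℕ) (q t : F) :
    Matrix (Fin (d + 1)) (Fin (d + 1)) F :=
  Matrix.of fun i j =>
    if (i : ℕ) = (j : ℕ) then q ^ (2 * ((i : ℕ) : ℤ) - (d : ℤ))
    else if (i : ℕ) + 1 = (j : ℕ) then
      (q ^ (d : ℤ) - q ^ (2 * ((j : ℕ) : ℤ) - 2 - (d : ℤ))) /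
        (1 - t * q ^ ((d : ℤ) - 2 * ((j : ℕ) : ℤ) + 1))
    else 0

/-- The claimed inverse of `L_q(t)`: upper triangular with `(i,j)`-entry
`(q^{2(d-j+1)}; q²)_{j-i} / (t q^{d-2j+1}; q²)_{j-i} · q^{d-2j}` for `i ≤ j`. -/
def LmatInv {F : Type*} [Field F] (d : ℕ) (q t : F) :
    Matrix (Fin (d + 1)) (Fin (d + 1)) F :=
  Matrix.of fun i j =>
    if (i : ℕ) ≤ (j : ℕ) then
      qPoch (q ^ (2 * ((d : ℤ) - ((j : ℕ) : ℤ) + 1))) (q ^ 2) ((j : ℕ) - (i : ℕ)) /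
          qPoch (t * q ^ ((d : ℤ) - 2 * ((j : ℕ) : ℤ) + 1)) (q ^ 2) ((j : ℕ) - (i : ℕ)) *
        q ^ ((d : ℤ) - 2 * ((j : ℕ) : ℤ))
    else 0

lemma denom_ne {F : Type*} [Field F] (d : ℕ) (q : F) (t : F)
    (htq : ∀ n : ℕ, 1 ≤ n → n ≤ d → t ≠ q ^ ((d : ℤ) - 2 * (n : ℤ) + 1)) :
    ∀ n : ℕ, 1 ≤ n → n ≤ d → (1 : F) - t * q ^ ((d : ℤ) - 2 * (n : ℤ) + 1) ≠ 0 := by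
  intro n h1 h2 h
  have h' : t * q ^ ((d : ℤ) - 2 * (n : ℤ) + 1) = 1 := by linear_combination -h
  apply htq (d + 1 - n) (by omega) (by omega)
  rw [eq_inv_of_mul_eq_one_left h', ← zpow_neg]
  congr 1
  push_cast [Nat.cast_sub (by omega : n ≤ d + 1)]
  ring

lemma qpoch_ne {F : Type*} [Field F] (d : ℕ) (q : F) (hq : q ≠ 0) (t : F)
    (htq : ∀ n : ℕ, 1 ≤ n → n ≤ d → t ≠ q ^ ((d : ℤ) - 2 * (n : ℤ) + 1))
    (j m : ℕ) (hj : j ≤ d) (hm : m ≤ j) :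
    qPoch (t * q ^ ((d : ℤ) - 2 * (j : ℤ) + 1)) (q ^ 2) m ≠ 0 := by
  unfold qPoch
  rw [Finset.prod_ne_zero_iff]
  intro k hk
  rw [Finset.mem_range] at hk
  have key : t * q ^ ((d : ℤ) - 2 * (j : ℤ) + 1) * (q ^ 2) ^ k
      = t * q ^ ((d : ℤ) - 2 * ((j - k : ℕ) : ℤ) + 1) := by
    rw [← pow_mul, mul_assoc, ← zpow_natCast q (2 * k), ← zpow_add₀ hq]
    congr 2
    push_cast [Nat.cast_sub (by omega : k ≤ j)]
    ring
  rw [key]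
  exact denom_ne d q t htq (j - k) (by omega) (by omega)

lemma keyalg {F : Type*} [Field F] (X Y W P Q C : F) (hX : X ≠ 0) (hQ : Q ≠ 0) (hC : C ≠ 0) :
    X * (P * (1 - Y / X) / (Q * C) * W) + (Y - X) / C * (P / Q * W) = 0 := by
  field_simp
  ring

theorem stmt_14 {F : Type*} [Field F] (d : ℕ) (hd : 1 ≤ d) (q : F) (hq : q ≠ 0)
    (hroot : ∀ n : ℕ, 0 < n → q ^ n ≠ 1) (t : F) (ht : t ≠ 0)
    (htq : ∀ n : ℕ, 1 ≤ n → n ≤ d → t ≠ q ^ ((d : ℤ) - 2 * (n : ℤ) + 1)) :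
    Lmat d q t * LmatInv d q t = 1 ∧ LmatInv d q t * Lmat d q t = 1 := by
  have lowz : ∀ i j : Fin (d + 1), (j : ℕ) < (i : ℕ) → LmatInv d q t i j = 0 := by
    intro i j hij
    simp only [LmatInv, Matrix.of_apply]
    rw [if_neg (by omega)]
  have diag : ∀ i j : Fin (d + 1), (i : ℕ) = (j : ℕ) →
      Lmat d q t i i * LmatInv d q t i j = 1 := by
    intro i j hij
    have e1 : Lmat d q t i i = q ^ (2 * ((i : ℕ) : ℤ) - (d : ℤ)) := by
      simp [Lmat]
    have e2 : LmatInv d q t i j = q ^ ((d : ℤ) - 2 * ((i : ℕ) : ℤ)) := by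
      simp only [LmatInv, Matrix.of_apply]
      rw [if_pos (by omega), show (j : ℕ) - (i : ℕ) = 0 by omega, ← hij]
      simp [qPoch]
    rw [e1, e2, ← zpow_add₀ hq,
      show 2 * ((i : ℕ) : ℤ) - (d : ℤ) + ((d : ℤ) - 2 * ((i : ℕ) : ℤ)) = 0 by ring,
      zpow_zero]
  have key : Lmat d q t * LmatInv d q t = 1 := by
    ext i j
    rw [Matrix.mul_apply, Matrix.one_apply]
    by_cases hid : (i : ℕ) < d
    · set i' : Fin (d + 1) := ⟨(i : ℕ) + 1, by omega⟩ with hi'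
      have hvi : (i' : ℕ) = (i : ℕ) + 1 := rfl
      have hii' : i ≠ i' := by
        intro h
        have := congrArg Fin.val h
        omega
      have hsum : ∑ k, Lmat d q t i k * LmatInv d q t k j
          = Lmat d q t i i * LmatInv d q t i j + Lmat d q t i i' * LmatInv d q t i' j := by
        apply Finset.sum_eq_add_of_mem i i' (Finset.mem_univ _) (Finset.mem_univ _) hii'
        intro c _ hc
        have h1 : (i : ℕ) ≠ (c : ℕ) := fun h => hc.1 (Fin.ext h.symm)
        have h2 : (i : ℕ) + 1 ≠ (c : ℕ) := fun h => hc.2 (Fin.ext (hvi.trans h).symm)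
        simp only [Lmat, Matrix.of_apply]
        rw [if_neg h1, if_neg h2, zero_mul]
      rw [hsum]
      rcases lt_trichotomy ((i : ℕ)) ((j : ℕ)) with hlt | heq | hgt
      · -- main off-diagonal case
        rw [if_neg (fun h => by omega : ¬ i = j)]
        have hjd : (j : ℕ) ≤ d := by omega
        have hLII : Lmat d q t i i = q ^ (2 * ((i : ℕ) : ℤ) - (d : ℤ)) := by
          simp [Lmat]
        have hC : (1 : F) - t * q ^ ((d : ℤ) - 2 * (((i : ℕ) : ℤ) + 1) + 1) ≠ 0 := by
          have h0 := denom_ne d q t htq ((i : ℕ) + 1) (by omega) (by omega)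
          push_cast at h0
          convert h0 using 4
        have hLII' : Lmat d q t i i' =
            (q ^ (d : ℤ) - q ^ (2 * ((i : ℕ) : ℤ) - (d : ℤ))) /
              (1 - t * q ^ ((d : ℤ) - 2 * (((i : ℕ) : ℤ) + 1) + 1)) := by
          simp only [Lmat, Matrix.of_apply, hvi, Nat.cast_add, Nat.cast_one]
          rw [if_neg (by omega), if_true,
            show 2 * (((i : ℕ) : ℤ) + 1) - 2 - (d : ℤ) = 2 * ((i : ℕ) : ℤ) - (d : ℤ) by ring]
        set m1 : ℕ := (j : ℕ) - ((i : ℕ) + 1) with hm1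
        set P' : F := qPoch (q ^ (2 * ((d : ℤ) - ((j : ℕ) : ℤ) + 1))) (q ^ 2) m1 with hP'
        set Q' : F := qPoch (t * q ^ ((d : ℤ) - 2 * ((j : ℕ) : ℤ) + 1)) (q ^ 2) m1 with hQ'
        have hQ'ne : Q' ≠ 0 := qpoch_ne d q hq t htq (j : ℕ) m1 hjd (by omega)
        have hXne : q ^ (2 * ((i : ℕ) : ℤ) - (d : ℤ)) ≠ 0 := zpow_ne_zero _ hq
        have hPsplit : qPoch (q ^ (2 * ((d : ℤ) - ((j : ℕ) : ℤ) + 1))) (q ^ 2) (m1 + 1)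
            = P' * (1 - q ^ (d : ℤ) / q ^ (2 * ((i : ℕ) : ℤ) - (d : ℤ))) := by
          rw [hP']
          unfold qPoch
          rw [Finset.prod_range_succ]
          congr 2
          rw [← pow_mul, ← zpow_natCast q (2 * m1), ← zpow_add₀ hq, ← zpow_sub₀ hq]
          congr 1
          push_cast [hm1, Nat.cast_sub (by omega : (i : ℕ) + 1 ≤ (j : ℕ))]
          ring
        have hQsplit : qPoch (t * q ^ ((d : ℤ) - 2 * ((j : ℕ) : ℤ) + 1)) (q ^ 2) (m1 + 1)
            = Q' * (1 - t * q ^ ((d : ℤ) - 2 * (((i : ℕ) : ℤ) + 1) + 1)) := by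
          rw [hQ']
          unfold qPoch
          rw [Finset.prod_range_succ]
          congr 2
          rw [mul_assoc, ← pow_mul, ← zpow_natCast q (2 * m1), ← zpow_add₀ hq]
          congr 2
          push_cast [hm1, Nat.cast_sub (by omega : (i : ℕ) + 1 ≤ (j : ℕ))]
          ring
        have hInv1 : LmatInv d q t i j =
            P' * (1 - q ^ (d : ℤ) / q ^ (2 * ((i : ℕ) : ℤ) - (d : ℤ))) /
              (Q' * (1 - t * q ^ ((d : ℤ) - 2 * (((i : ℕ) : ℤ) + 1) + 1))) *
              q ^ ((d : ℤ) - 2 * ((j : ℕ) : ℤ)) := by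
          simp only [LmatInv, Matrix.of_apply]
          rw [if_pos (by omega), show (j : ℕ) - (i : ℕ) = m1 + 1 by omega, hPsplit, hQsplit]
        have hInv2 : LmatInv d q t i' j = P' / Q' * q ^ ((d : ℤ) - 2 * ((j : ℕ) : ℤ)) := by
          simp only [LmatInv, Matrix.of_apply, hvi]
          rw [if_pos (by omega), ← hm1, ← hP', ← hQ']
        rw [hLII, hLII', hInv1, hInv2]
        exact keyalg _ _ _ _ _ _ hXne hQ'ne hC
      · rw [if_pos (Fin.ext heq)]
        have h2 : LmatInv d q t i' j = 0 := lowz i' j (by omega)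
        rw [h2, mul_zero, add_zero, diag i j heq]
      · rw [if_neg (fun h => by omega : ¬ i = j)]
        rw [lowz i j hgt, lowz i' j (by omega), mul_zero, mul_zero, add_zero]
    · have hieq : (i : ℕ) = d := by omega
      have hsum : ∑ k, Lmat d q t i k * LmatInv d q t k j
          = Lmat d q t i i * LmatInv d q t i j := by
        apply Finset.sum_eq_single_of_mem i (Finset.mem_univ _)
        intro c _ hc
        have h1 : (i : ℕ) ≠ (c : ℕ) := fun h => hc (Fin.ext h.symm)
        have h2 : (i : ℕ) + 1 ≠ (c : ℕ) := by omega
        simp only [Lmat, Matrix.of_apply]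
        rw [if_neg h1, if_neg h2, zero_mul]
      rw [hsum]
      by_cases hij : (i : ℕ) = (j : ℕ)
      · rw [if_pos (Fin.ext hij), diag i j hij]
      · rw [if_neg (fun h => hij (congrArg Fin.val h))]
        rw [lowz i j (by omega), mul_zero]
  exact ⟨key, mul_eq_one_comm.mp key⟩
end

section
/- Let F be a field, d ≥ 1, q nonzero not a root of unity, t nonzero with t ∉ {q^{d-2n+1} : 1 ≤ n ≤ d}. With E_q, K_q, L_q(t) as above, one has the identity t⁻¹ (E_q - L_q(t)) = [L_q(t), K_q]/(q - q⁻¹), where [A,B] = AB - BA. -/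
/-- The diagonal matrix `K_q` with `(i,i)`-entry `q^(d-2i)`. -/
def Kmat {F : Type*} [Field F] (d : ℕ) (q : F) :
    Matrix (Fin (d + 1)) (Fin (d + 1)) F :=
  Matrix.diagonal fun i => q ^ ((d : ℤ) - 2 * ((i : ℕ) : ℤ))

/-- The upper bidiagonal matrix `E_q`. -/
def Emat {F : Type*} [Field F] (d : ℕ) (q : F) :
    Matrix (Fin (d + 1)) (Fin (d + 1)) F :=
  Matrix.of fun i j =>
    if (i : ℕ) = (j : ℕ) then q ^ (2 * ((i : ℕ) : ℤ) - (d : ℤ))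
    else if (i : ℕ) + 1 = (j : ℕ) then
      q ^ (d : ℤ) - q ^ (2 * ((j : ℕ) : ℤ) - 2 - (d : ℤ))
    else 0

/-!
Both sides vanish off the superdiagonal. On the superdiagonal, `E_q` and `L_q(t)` differ only
by the factor `1 - t q^{d-2j+1}`, so `t⁻¹ (E - L)` at `(j-1, j)` equals `-L_{j-1,j} q^{d-2j+1}`;
commuting with the diagonal `K_q` multiplies that entry by `q^{d-2j} - q^{d-2j+2}`, which is
`-(q - q⁻¹) q^{d-2j+1}`.
-/

theorem Matrix.mul_diagonal_sub_diagonal_mul_apply {n R : Type*} [Fintype n] [DecidableEq n]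
    [CommRing R] (A : Matrix n n R) (k : n → R) (i j : n) :
    (A * diagonal k - diagonal k * A) i j = A i j * (k j - k i) := by
  rw [sub_apply, mul_diagonal, diagonal_mul, mul_sub, mul_comm (k i)]

lemma inv_mul_sub_div_one_sub_mul {K : Type*} [Field K] {t y : K} (e : K) (ht : t ≠ 0)
    (hden : 1 - t * y ≠ 0) :
    t⁻¹ * (e - e / (1 - t * y)) = -(e / (1 - t * y) * y) := by
  field_simp
  ring

lemma sub_inv_ne_zero_of_sq_ne_one {K : Type*} [Field K] {q : K} (hq : q ≠ 0)
    (hq2 : q ^ 2 ≠ 1) : q - q⁻¹ ≠ 0 := by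
  rw [sub_ne_zero]
  intro h
  exact hq2 (by rw [sq]; nth_rw 2 [h]; exact mul_inv_cancel₀ hq)

lemma inv_sub_inv_mul_zpow_sub_one_sub_zpow_add_one {K : Type*} [Field K] {q : K} (hq : q ≠ 0)
    (hq2 : q ^ 2 ≠ 1) (m : ℤ) :
    (q - q⁻¹)⁻¹ * (q ^ (m - 1) - q ^ (m + 1)) = -q ^ m := by
  have := sub_inv_ne_zero_of_sq_ne_one hq hq2
  rw [zpow_sub_one₀ hq, zpow_add_one₀ hq]
  field_simp
  ring

/-- `t q^{d-2j+1} = 1` would give `t = q^{d-2n+1}` for `n = d + 1 - j`. -/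
lemma one_sub_mul_zpow_ne_zero {F : Type*} [Field F] {d : ℕ} {q t : F}
    (htq : ∀ n : ℕ, 1 ≤ n → n ≤ d → t ≠ q ^ ((d : ℤ) - 2 * (n : ℤ) + 1)) {j : ℕ}
    (hj1 : 1 ≤ j) (hjd : j ≤ d) :
    1 - t * q ^ ((d : ℤ) - 2 * (j : ℤ) + 1) ≠ 0 := by
  intro h
  refine htq (d + 1 - j) (by omega) (by omega) ?_
  rw [eq_inv_of_mul_eq_one_left (sub_eq_zero.mp h).symm, ← zpow_neg]
  congr 1
  push_cast [Nat.cast_sub (by omega : j ≤ d + 1)]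
  ring

theorem stmt_18_general {F : Type*} [Field F] (d : ℕ) (q : F) (hq : q ≠ 0)
    (hroot : ∀ n : ℕ, 0 < n → q ^ n ≠ 1) (t : F) (ht : t ≠ 0)
    (htq : ∀ n : ℕ, 1 ≤ n → n ≤ d → t ≠ q ^ ((d : ℤ) - 2 * (n : ℤ) + 1)) :
    t⁻¹ • (Emat d q - Lmat d q t) =
      (q - q⁻¹)⁻¹ • (Lmat d q t * Kmat d q - Kmat d q * Lmat d q t) := by
  ext i j
  rw [Matrix.smul_apply, Matrix.smul_apply, Kmat, Matrix.mul_diagonal_sub_diagonal_mul_apply,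
    Matrix.sub_apply, smul_eq_mul, smul_eq_mul]
  by_cases hdiag : (i : ℕ) = j
  · simp [Emat, Lmat, hdiag]
  by_cases hsuper : (i : ℕ) + 1 = j
  · have hden := one_sub_mul_zpow_ne_zero htq (j := j) (by omega) (by omega)
    have hK : q ^ ((d : ℤ) - 2 * ((j : ℕ) : ℤ)) - q ^ ((d : ℤ) - 2 * ((i : ℕ) : ℤ)) =
        q ^ ((d : ℤ) - 2 * ((j : ℕ) : ℤ) + 1 - 1) -
          q ^ ((d : ℤ) - 2 * ((j : ℕ) : ℤ) + 1 + 1) := by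
      congr 2 <;> omega
    simp only [Emat, Lmat, Matrix.of_apply, if_neg hdiag, if_pos hsuper]
    rw [inv_mul_sub_div_one_sub_mul _ ht hden, hK, mul_left_comm,
      inv_sub_inv_mul_zpow_sub_one_sub_zpow_add_one hq (hroot 2 two_pos)]
    ring
  · simp [Emat, Lmat, hdiag, hsuper]

theorem stmt_18 {F : Type*} [Field F] (d : ℕ) (hd : 1 ≤ d) (q : F) (hq : q ≠ 0)
    (hroot : ∀ n : ℕ, 0 < n → q ^ n ≠ 1) (t : F) (ht : t ≠ 0)
    (htq : ∀ n : ℕ, 1 ≤ n → n ≤ d → t ≠ q ^ ((d : ℤ) - 2 * (n : ℤ) + 1)) :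
    t⁻¹ • (Emat d q - Lmat d q t) =
      (q - q⁻¹)⁻¹ • (Lmat d q t * Kmat d q - Kmat d q * Lmat d q t) :=
  stmt_18_general d q hq hroot t ht htq
end
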